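/- In a maximal [r,s,t]-coloring of a graph G, if there is exactly one edge between a size-3 class X_i and a size-2 class U_j, then for every other size-2 class U_{j'} there are at least 3 edges between X_i and U_{j'}. -/

import Mathlib

open Finset

variable {V : Type*}

/-- `P` is the set of color classes of an `[r,s,t]`-coloring of `G`:
a partition of the vertices into independent sets, with `r` classes of size 3,
`s` classes of size 2 and `t` singleton classes. -/
def IsRST [Fintype V] [DecidableEq V] (G : SimpleGraph V) (P : Finset (Finset V))
    (r s t : ℕ) : Prop :=
  (∀ v : V, ∃! A, A ∈ P ∧ v ∈ A) ∧
  (∀ A ∈ P, ∀ u ∈ A, ∀ w ∈ A, ¬ G.Adj u w) ∧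
  (P.filter (fun A => A.card = 3)).card = r ∧
  (P.filter (fun A => A.card = 2)).card = s ∧
  (P.filter (fun A => A.card = 1)).card = t ∧
  (∀ A ∈ P, A.card = 1 ∨ A.card = 2 ∨ A.card = 3)

/-- A maximal `[r,s,t]`-coloring: for any other `[r',s',t']`-coloring,
either `r > r'`, or `r = r'` and `s ≥ s'`. -/
def IsMaxRST [Fintype V] [DecidableEq V] (G : SimpleGraph V) (P : Finset (Finset V))
    (r s t : ℕ) : Prop :=
  IsRST G P r s t ∧
  ∀ (P' : Finset (Finset V)) (r' s' t' : ℕ), IsRST G P' r' s' t' →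
    r' < r ∨ (r' = r ∧ s' ≤ s)

/-- `eB G X Y` is the number of edges with one endpoint in `X` and the other in `Y`. -/
def eB [Fintype V] [DecidableEq V] (G : SimpleGraph V) [DecidableRel G.Adj]
    (X Y : Finset V) : ℕ :=
  ((X ×ˢ Y).filter fun p => G.Adj p.1 p.2).card

/-- `G` is equitably `k`-colorable: a proper `k`-coloring whose color classes
have sizes differing pairwise by at most 1. -/
def EqColorable [Fintype V] (G : SimpleGraph V) (k : ℕ) : Prop :=
  ∃ C : V → Fin k, (∀ u v, G.Adj u v → C u ≠ C v) ∧
    ∀ i j : Fin k,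
      (Finset.univ.filter fun v => C v = i).card ≤
        (Finset.univ.filter fun v => C v = j).card + 1

/-!
If `eB G X U' ≤ 2`, some `x ∈ X` has no neighbour in `U'`; since `eB G X U = 1`, some `u ∈ U`
has no neighbour in `X \ {x}`. Recolouring `X ∪ U ∪ U'` with the classes `U' ∪ {x}`,
`(X \ {x}) ∪ {u}` and `U \ {u}` trades one class of size 3 for two, contradicting maximality.
-/

theorem Finset.card_filter_sdiff_union_add {α : Type*} [DecidableEq α] {P Old New : Finset α}
    (p : α → Prop) [DecidablePred p] (hOld : Old ⊆ P) (hdisj : Disjoint (P \ Old) New) :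
    ((P \ Old ∪ New).filter p).card + (Old.filter p).card =
      (P.filter p).card + (New.filter p).card := by
  rw [filter_union, card_union_of_disjoint (disjoint_filter_filter hdisj), add_right_comm,
    ← card_union_of_disjoint (disjoint_filter_filter sdiff_disjoint), ← filter_union,
    sdiff_union_of_subset hOld]

section eB

variable [Fintype V] [DecidableEq V] (G : SimpleGraph V) [DecidableRel G.Adj]

theorem eB_comm (X Y : Finset V) : eB G X Y = eB G Y X :=
  card_bij' (fun p _ => p.swap) (fun p _ => p.swap)
    (by simp +contextual [G.adj_comm]) (by simp +contextual [G.adj_comm]) (by simp) (by simp)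

theorem eB_mono_left {X X' : Finset V} (hX : X' ⊆ X) (Y : Finset V) : eB G X' Y ≤ eB G X Y :=
  card_le_card (filter_subset_filter _ (product_subset_product hX le_rfl))

theorem exists_forall_not_adj_of_eB_lt_card {X Y : Finset V} (h : eB G X Y < X.card) :
    ∃ x ∈ X, ∀ y ∈ Y, ¬ G.Adj x y := by
  by_contra! hall
  refine h.not_ge ?_
  calc X.card ≤ (((X ×ˢ Y).filter fun p => G.Adj p.1 p.2).image Prod.fst).card :=
        card_le_card fun x hx => by
          obtain ⟨y, hy, hxy⟩ := hall x hx
          exact mem_image.2 ⟨(x, y), by simp [hx, hy, hxy], rfl⟩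
    _ ≤ eB G X Y := card_image_le

end eB

theorem forall_not_adj_insert [DecidableEq V] {G : SimpleGraph V} {A : Finset V} {a : V}
    (hA : ∀ u ∈ A, ∀ w ∈ A, ¬ G.Adj u w) (ha : ∀ w ∈ A, ¬ G.Adj a w) :
    ∀ u ∈ insert a A, ∀ w ∈ insert a A, ¬ G.Adj u w := by
  simp only [mem_insert]
  rintro u (rfl | hu) w (rfl | hw)
  exacts [G.loopless.irrefl _, ha w hw, fun h => ha u hu h.symm, hA u hu w hw]

namespace IsRST

variable [Fintype V] [DecidableEq V] {G : SimpleGraph V} {P Old New : Finset (Finset V)}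
  {r s t : ℕ}

theorem eq_of_mem (hP : IsRST G P r s t) {A B : Finset V} (hA : A ∈ P) (hB : B ∈ P) {v : V}
    (hvA : v ∈ A) (hvB : v ∈ B) : A = B :=
  (hP.1 v).unique ⟨hA, hvA⟩ ⟨hB, hvB⟩

theorem disjoint (hP : IsRST G P r s t) {A B : Finset V} (hA : A ∈ P) (hB : B ∈ P)
    (hAB : A ≠ B) : Disjoint A B :=
  disjoint_left.2 fun _ hvA hvB => hAB (hP.eq_of_mem hA hB hvA hvB)

theorem mem_of_mem_biUnion (hP : IsRST G P r s t) (hOld : Old ⊆ P) {B : Finset V}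
    (hB : B ∈ P) {v : V} (hvB : v ∈ B) (hv : v ∈ Old.biUnion id) : B ∈ Old := by
  obtain ⟨A, hA, hvA⟩ := mem_biUnion.1 hv
  rwa [hP.eq_of_mem hB (hOld hA) hvB hvA]

theorem disjoint_sdiff_of_biUnion_eq (hP : IsRST G P r s t) (hOld : Old ⊆ P)
    (hunion : Old.biUnion id = New.biUnion id) (hne : ∀ B ∈ New, B.Nonempty) :
    Disjoint (P \ Old) New := by
  refine disjoint_left.2 fun B hBP hBN => (mem_sdiff.1 hBP).2 ?_
  obtain ⟨v, hv⟩ := hne B hBN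
  exact hP.mem_of_mem_biUnion hOld (mem_sdiff.1 hBP).1 hv (hunion ▸ mem_biUnion.2 ⟨B, hBN, hv⟩)

theorem sdiff_union (hP : IsRST G P r s t) (hOld : Old ⊆ P)
    (hunion : Old.biUnion id = New.biUnion id) (hdisj : (New : Set (Finset V)).PairwiseDisjoint id)
    (hindep : ∀ B ∈ New, ∀ u ∈ B, ∀ w ∈ B, ¬ G.Adj u w)
    (hcard : ∀ B ∈ New, B.card = 1 ∨ B.card = 2 ∨ B.card = 3) :
    IsRST G (P \ Old ∪ New) ((P \ Old ∪ New).filter (·.card = 3)).card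
      ((P \ Old ∪ New).filter (·.card = 2)).card
      ((P \ Old ∪ New).filter (·.card = 1)).card := by
  have hnew_sub : ∀ B ∈ New, ∀ v ∈ B, v ∈ Old.biUnion id := fun B hB v hv =>
    hunion ▸ mem_biUnion.2 ⟨B, hB, hv⟩
  refine ⟨fun v => ?_, ?_, rfl, rfl, rfl, ?_⟩
  · obtain ⟨A, ⟨hA, hvA⟩, -⟩ := hP.1 v
    obtain ⟨B, hB, hvB⟩ : ∃ B ∈ P \ Old ∪ New, v ∈ B := by
      by_cases hAOld : A ∈ Old
      · obtain ⟨B, hB, hvB⟩ := mem_biUnion.1 (hunion ▸ mem_biUnion.2 ⟨A, hAOld, hvA⟩)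
        exact ⟨B, mem_union_right _ hB, hvB⟩
      · exact ⟨A, mem_union_left _ (mem_sdiff.2 ⟨hA, hAOld⟩), hvA⟩
    refine ⟨B, ⟨hB, hvB⟩, fun C ⟨hC, hvC⟩ => ?_⟩
    rcases mem_union.1 hB with hB | hB <;> rcases mem_union.1 hC with hC | hC
    · exact hP.eq_of_mem (mem_sdiff.1 hC).1 (mem_sdiff.1 hB).1 hvC hvB
    · exact absurd (hP.mem_of_mem_biUnion hOld (mem_sdiff.1 hB).1 hvB (hnew_sub C hC v hvC))
        (mem_sdiff.1 hB).2
    · exact absurd (hP.mem_of_mem_biUnion hOld (mem_sdiff.1 hC).1 hvC (hnew_sub B hB v hvB))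
        (mem_sdiff.1 hC).2
    · by_contra hCB
      exact disjoint_left.1 (hdisj hC hB hCB) hvC hvB
  · intro B hB
    rcases mem_union.1 hB with hB | hB
    · exact hP.2.1 B (mem_sdiff.1 hB).1
    · exact hindep B hB
  · intro B hB
    rcases mem_union.1 hB with hB | hB
    · exact hP.2.2.2.2.2 B (mem_sdiff.1 hB).1
    · exact hcard B hB

theorem exists_isRST_succ_of_exchange (hP : IsRST G P r s t) {X U U' : Finset V}
    (hX : X ∈ P) (hU : U ∈ P) (hU' : U' ∈ P) (hUU' : U ≠ U')
    (hX3 : X.card = 3) (hU2 : U.card = 2) (hU'2 : U'.card = 2) {x u : V} (hx : x ∈ X)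
    (hu : u ∈ U) (hxU' : ∀ w ∈ U', ¬ G.Adj x w) (huX : ∀ a ∈ X.erase x, ¬ G.Adj u a) :
    ∃ P' s' t', IsRST G P' (r + 1) s' t' := by
  have dXU := hP.disjoint hX hU (by rintro rfl; omega)
  have dXU' := hP.disjoint hX hU' (by rintro rfl; omega)
  have dUU' := hP.disjoint hU hU' hUU'
  have hxnU : x ∉ U := disjoint_left.1 dXU hx
  have hxnU' : x ∉ U' := disjoint_left.1 dXU' hx
  have hunX : u ∉ X := disjoint_right.1 dXU hu
  have hunU' : u ∉ U' := disjoint_left.1 dUU' hu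
  set Old : Finset (Finset V) := {X, U, U'}
  set New : Finset (Finset V) := {insert x U', insert u (X.erase x), U.erase u}
  have hOld : Old ⊆ P := by simp [Old, insert_subset_iff, hX, hU, hU']
  have hunion : Old.biUnion id = New.biUnion id := by
    ext v
    simp only [Old, New, mem_biUnion, mem_insert, mem_singleton, mem_erase, id,
      exists_eq_or_imp, exists_eq_left]
    by_cases hvx : v = x <;> by_cases hvu : v = u <;> subst_vars <;> tauto
  have hdisj : (New : Set (Finset V)).PairwiseDisjoint id := by
    have d12 : Disjoint (insert x U') (insert u (X.erase x)) := by
      rw [disjoint_insert_left, disjoint_insert_right]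
      exact ⟨by grind, hunU', dXU'.symm.mono_right (erase_subset _ _)⟩
    have d13 : Disjoint (insert x U') (U.erase u) := by
      rw [disjoint_insert_left]
      exact ⟨fun h => hxnU (mem_of_mem_erase h), dUU'.symm.mono_right (erase_subset _ _)⟩
    have d23 : Disjoint (insert u (X.erase x)) (U.erase u) := by
      rw [disjoint_insert_left]
      exact ⟨by simp, dXU.mono (erase_subset _ _) (erase_subset _ _)⟩
    simp only [New, coe_insert, coe_singleton]
    rintro B (rfl | rfl | rfl) C (rfl | rfl | rfl) hBC
    all_goals first | exact absurd rfl hBC | assumption | exact Disjoint.symm ‹_›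
  have hindep : ∀ B ∈ New, ∀ a ∈ B, ∀ b ∈ B, ¬ G.Adj a b := by
    simp only [New, mem_insert, mem_singleton]
    rintro B (rfl | rfl | rfl)
    · exact forall_not_adj_insert (hP.2.1 U' hU') hxU'
    · exact forall_not_adj_insert (fun a ha b hb => hP.2.1 X hX a (mem_of_mem_erase ha)
        b (mem_of_mem_erase hb)) huX
    · exact fun a ha b hb => hP.2.1 U hU a (mem_of_mem_erase ha) b (mem_of_mem_erase hb)
  have hcard1 : (insert x U').card = 3 := by rw [card_insert_of_notMem hxnU', hU'2]
  have hcard2 : (insert u (X.erase x)).card = 3 := by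
    rw [card_insert_of_notMem (fun h => hunX (mem_of_mem_erase h)), card_erase_of_mem hx, hX3]
  have hcard3 : (U.erase u).card = 1 := by rw [card_erase_of_mem hu, hU2]
  have hcard : ∀ B ∈ New, B.card = 1 ∨ B.card = 2 ∨ B.card = 3 := by
    simp only [New, mem_insert, mem_singleton]
    rintro B (rfl | rfl | rfl) <;> omega
  have hcount := card_filter_sdiff_union_add (·.card = 3) hOld
    (hP.disjoint_sdiff_of_biUnion_eq hOld hunion fun B hB => card_pos.1 (by grind))
  have hOld3 : (Old.filter (·.card = 3)).card = 1 := by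
    simp [Old, filter_insert, filter_singleton, hX3, hU2, hU'2]
  have hNew3 : (New.filter (·.card = 3)).card = 2 := by
    have h12 : insert x U' ≠ insert u (X.erase x) :=
      ne_of_mem_of_not_mem' (mem_insert_self x U') (by simp [(ne_of_mem_of_not_mem hx hunX)])
    simp [New, filter_insert, filter_singleton, hcard1, hcard2, hcard3, h12]
  have hr' : ((P \ Old ∪ New).filter (·.card = 3)).card = r + 1 := by
    rw [← hP.2.2.1]
    omega
  exact ⟨_, _, _, hr' ▸ hP.sdiff_union hOld hunion hdisj hindep hcard⟩

end IsRST

theorem stmt12 [Fintype V] [DecidableEq V] (G : SimpleGraph V) [DecidableRel G.Adj]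
    (P : Finset (Finset V)) (r s t : ℕ)
    (h : IsMaxRST G P r s t)
    (X U : Finset V)
    (hX : X ∈ P) (hX3 : X.card = 3) (hU : U ∈ P) (hU2 : U.card = 2)
    (h1 : eB G X U = 1) :
    ∀ U' ∈ P, U'.card = 2 → U' ≠ U → 3 ≤ eB G X U' := by
  intro U' hU' hU'2 hne
  by_contra! hlt
  obtain ⟨x, hx, hxU'⟩ := exists_forall_not_adj_of_eB_lt_card G (hX3 ▸ hlt)
  have hlt' : eB G U (X.erase x) < U.card :=
    calc eB G U (X.erase x) = eB G (X.erase x) U := eB_comm G _ _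
      _ ≤ eB G X U := eB_mono_left G (erase_subset x X) U
      _ < U.card := by omega
  obtain ⟨u, hu, huX⟩ := exists_forall_not_adj_of_eB_lt_card G hlt'
  obtain ⟨P', s', t', hP'⟩ := h.1.exists_isRST_succ_of_exchange hX hU hU' hne.symm hX3 hU2 hU'2 hx hu hxU' huX
  have := h.2 P' _ s' t' hP'
  omega
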